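/- Let n be a positive integer, let A, B ⊆ [n] be nonempty with |A| ≤ |B|, and let δ, η be real numbers with δ ≥ η ≥ 1, δ·|A| ≤ n−1, and η·|B| ≤ n−1. If |f_η(B)| − |B| ≤ η − 1 and A ⊈ B, then the interval [A, f_δ(A)] does not intersect the interval [B, f_η(B)]. -/
import Mathlib


/-- The point of the circular representation of `[N] = {1, …, N}` reached from the
point `x` after `t` clockwise steps. -/
def cpt (N x t : ℕ) : ℕ := (x - 1 + t) % N + 1

/-- The block of `len` clockwise-consecutive points of the circular representation
of `[N]` starting at the point `x`. -/
def cblock (N x len : ℕ) : Finset ℕ := (Finset.range len).image (cpt N x)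

/-- Data describing a candidate block structure on the circular representation of a
set `[N]`: the number `p` of blocks, the first (clockwise) element `b i` of the `i`-th
block `B i`, the length `lenB i` of `B i`, and the length `lenG i` of the gap `G i`
following `B i` clockwise (only the indices `i < p` are relevant). -/
structure CircData where
  p : ℕ
  b : ℕ → ℕ
  lenB : ℕ → ℕ
  lenG : ℕ → ℕ

/-- The `i`-th block `B i` of the data `S` on the circular representation of `[N]`. -/
def CircData.Blk (S : CircData) (N i : ℕ) : Finset ℕ := cblock N (S.b i) (S.lenB i)

/-- The `i`-th gap `G i` of the data `S`, which follows the block `B i` clockwise. -/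
def CircData.Gap (S : CircData) (N i : ℕ) : Finset ℕ :=
  cblock N (cpt N (S.b i) (S.lenB i)) (S.lenG i)

/-- `S` describes the block structure `B_1, G_1, B_2, G_2, …, B_p, G_p` of the set `A`
with respect to the density `δ` on the circular representation of `[N]`. -/
def IsBlockStructure (N : ℕ) (A : Finset ℕ) (δ : ℝ) (S : CircData) : Prop :=
  0 < S.p ∧
  -- each block is nonempty (it contains its first element `b i`)
  (∀ i < S.p, 0 < S.lenB i) ∧
  -- the blocks and gaps are arranged consecutively clockwise, cyclically
  (∀ i, i + 1 < S.p → S.b (i + 1) = cpt N (S.b i) (S.lenB i + S.lenG i)) ∧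
  S.b 0 = cpt N (S.b (S.p - 1)) (S.lenB (S.p - 1) + S.lenG (S.p - 1)) ∧
  -- the blocks and gaps form a partition of `[N]`
  ((Finset.range S.p).biUnion (fun i => S.Blk N i ∪ S.Gap N i) = Finset.Icc 1 N) ∧
  (∀ i < S.p, ∀ j < S.p, i ≠ j →
    Disjoint (S.Blk N i ∪ S.Gap N i) (S.Blk N j ∪ S.Gap N j)) ∧
  (∀ i < S.p, Disjoint (S.Blk N i) (S.Gap N i)) ∧
  -- (i) the first (clockwise) element of each block belongs to `A`
  (∀ i < S.p, S.b i ∈ A) ∧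
  -- (ii) the gaps are disjoint from `A`
  (∀ i < S.p, ∀ x ∈ S.Gap N i, x ∉ A) ∧
  -- (iii) `δ·|A ∩ B i| − 1 < |B i| ≤ δ·|A ∩ B i|`
  (∀ i < S.p, δ * ((A ∩ S.Blk N i).card : ℝ) - 1 < ((S.Blk N i).card : ℝ) ∧
    ((S.Blk N i).card : ℝ) ≤ δ * ((A ∩ S.Blk N i).card : ℝ)) ∧
  -- (iv) every proper initial segment `[b i, y] ⊊ B i` satisfies
  -- `|[b i, y]| + 1 ≤ δ·|[b i, y] ∩ A|`
  (∀ i < S.p, ∀ t, 0 < t → t < S.lenB i →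
    ((cblock N (S.b i) t).card : ℝ) + 1 ≤ δ * ((cblock N (S.b i) t ∩ A).card : ℝ))

/-- The union `𝒢_δ(A) = G_1 ∪ ⋯ ∪ G_p` of the gaps of the block structure `S`. -/
def CircData.gapsUnion (S : CircData) (N : ℕ) : Finset ℕ :=
  (Finset.range S.p).biUnion (S.Gap N)

/-- `f_δ(A) = A ∪ 𝒢_δ(A)`, computed from the block structure `S` of `A` on `[N]`. -/
def fdelta (A : Finset ℕ) (S : CircData) (N : ℕ) : Finset ℕ := A ∪ S.gapsUnion N



lemma cpt_add (N x a b : ℕ) : cpt N (cpt N x a) b = cpt N x (a + b) := by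
  unfold cpt
  simp only [Nat.add_sub_cancel]
  rw [Nat.mod_add_mod, Nat.add_assoc]

lemma cpt_zero (N x : ℕ) (h1 : 1 ≤ x) (h2 : x ≤ N) : cpt N x 0 = x := by
  unfold cpt
  rw [Nat.add_zero, Nat.mod_eq_of_lt (by omega)]
  omega

lemma cpt_mem_Icc (N x t : ℕ) (hN : 0 < N) : cpt N x t ∈ Finset.Icc 1 N := by
  unfold cpt
  have := Nat.mod_lt (x - 1 + t) hN
  simp only [Finset.mem_Icc]
  omega

lemma cpt_inj (N x : ℕ) {t1 t2 : ℕ} (h1 : t1 < N) (h2 : t2 < N)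
    (h : cpt N x t1 = cpt N x t2) : t1 = t2 := by
  unfold cpt at h
  have h' : (x - 1 + t1) % N = (x - 1 + t2) % N := by omega
  have : t1 % N = t2 % N := Nat.ModEq.add_left_cancel' (x - 1) h'
  rwa [Nat.mod_eq_of_lt h1, Nat.mod_eq_of_lt h2] at this

lemma mem_cblock {N x len y : ℕ} : y ∈ cblock N x len ↔ ∃ t < len, cpt N x t = y := by
  simp [cblock, Finset.mem_image, Finset.mem_range]

lemma cblock_mono (N x : ℕ) {k l : ℕ} (h : k ≤ l) : cblock N x k ⊆ cblock N x l :=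
  Finset.image_subset_image (Finset.range_subset_range.2 h)

lemma cblock_shift (N x a k : ℕ) : cblock N (cpt N x a) k ⊆ cblock N x (a + k) := by
  intro y hy
  obtain ⟨t, ht, rfl⟩ := mem_cblock.1 hy
  exact mem_cblock.2 ⟨a + t, by omega, by rw [← cpt_add]⟩

lemma cblock_card (N x len : ℕ) (h : len ≤ N) : (cblock N x len).card = len := by
  rw [cblock, Finset.card_image_of_injOn, Finset.card_range]
  intro t1 h1 t2 h2 he
  simp only [Finset.coe_range, Set.mem_Iio] at h1 h2
  exact cpt_inj N x (lt_of_lt_of_le h1 h) (lt_of_lt_of_le h2 h) he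

lemma cblock_union (N x : ℕ) {a len : ℕ} (h : a ≤ len) :
    cblock N x len = cblock N x a ∪ cblock N (cpt N x a) (len - a) := by
  apply Finset.Subset.antisymm
  · intro y hy
    obtain ⟨t, ht, rfl⟩ := mem_cblock.1 hy
    rcases lt_or_ge t a with h' | h'
    · exact Finset.mem_union_left _ (mem_cblock.2 ⟨t, h', rfl⟩)
    · refine Finset.mem_union_right _ (mem_cblock.2 ⟨t - a, by omega, ?_⟩)
      rw [cpt_add]; congr 1; omega
  · refine Finset.union_subset (cblock_mono N x h) ?_
    have := cblock_shift N x a (len - a)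
    rwa [Nat.add_sub_cancel' h] at this

lemma cblock_disjoint (N x : ℕ) {a len : ℕ} (h : a ≤ len) (hN : len ≤ N) :
    Disjoint (cblock N x a) (cblock N (cpt N x a) (len - a)) := by
  rw [Finset.disjoint_left]
  intro y hy1 hy2
  obtain ⟨t1, ht1, he1⟩ := mem_cblock.1 hy1
  obtain ⟨t2, ht2, he2⟩ := mem_cblock.1 hy2
  rw [cpt_add] at he2
  have : t1 = a + t2 := cpt_inj N x (by omega) (by omega) (he1.trans he2.symm)
  omega

lemma inter_card_split (N x : ℕ) (X : Finset ℕ) {a len : ℕ} (h : a ≤ len) (hN : len ≤ N) :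
    (X ∩ cblock N x len).card
      = (X ∩ cblock N x a).card + (X ∩ cblock N (cpt N x a) (len - a)).card := by
  rw [cblock_union N x h, Finset.inter_union_distrib_left]
  exact Finset.card_union_of_disjoint
    (Finset.disjoint_of_subset_left Finset.inter_subset_right
      (Finset.disjoint_of_subset_right Finset.inter_subset_right (cblock_disjoint N x h hN)))


/-- Walking clockwise from the start of block `j` of the structure `T` of `B`,
the set `B` covers a `1/η`-fraction of the arc, up to the gap points met. -/
lemma bdense (n : ℕ) (B : Finset ℕ) (η : ℝ) (T : CircData)
    (hT : IsBlockStructure n B η T) (hη0 : 0 ≤ η) :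
    ∀ len, len ≤ n → ∀ j < T.p,
      (len : ℝ) - ((T.gapsUnion n ∩ cblock n (T.b j) len).card : ℝ)
        ≤ η * ((B ∩ cblock n (T.b j) len).card : ℝ) := by
  obtain ⟨hTp, hTlen, hTadj, hTadj0, hTpart, hTdisj, hTbg, hTbB, hTgapB, hTiii, hTiv⟩ := hT
  intro len
  induction len using Nat.strong_induction_on with
  | _ len ih =>
  intro hlen j hj
  rcases Nat.eq_zero_or_pos len with h0 | hpos
  · subst h0; simp [cblock]
  set m := T.lenB j with hm
  set g := T.lenG j with hg
  rcases lt_trichotomy len m with hlt | heq | hgt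
  · -- proper prefix of block j : use (iv)
    have hiv := hTiv j hj len hpos hlt
    rw [cblock_card n (T.b j) len hlen] at hiv
    have hcomm : (cblock n (T.b j) len ∩ B).card = (B ∩ cblock n (T.b j) len).card := by
      rw [Finset.inter_comm]
    rw [hcomm] at hiv
    have : (0:ℝ) ≤ ((T.gapsUnion n ∩ cblock n (T.b j) len).card : ℝ) := by positivity
    linarith
  · -- the whole block j : use (iii)
    have hiii := (hTiii j hj).2
    rw [CircData.Blk, ← hm, ← heq, cblock_card n (T.b j) len hlen] at hiii
    have : (0:ℝ) ≤ ((T.gapsUnion n ∩ cblock n (T.b j) len).card : ℝ) := by positivity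
    linarith
  · -- len > m
    have hmn : m ≤ n := le_trans (le_of_lt hgt) hlen
    have hBlk_sub : T.Blk n j ⊆ cblock n (T.b j) len :=
      cblock_mono n (T.b j) (le_of_lt hgt)
    have hiii := (hTiii j hj).2
    have hBlkcard : ((T.Blk n j).card : ℝ) = m := by
      rw [CircData.Blk, ← hm, cblock_card n (T.b j) m hmn]
    have hBmono : ((B ∩ T.Blk n j).card : ℝ) ≤ ((B ∩ cblock n (T.b j) len).card : ℝ) := by
      exact_mod_cast Finset.card_le_card (Finset.inter_subset_inter (Finset.Subset.refl B) hBlk_sub)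
    have hstep1 : (m : ℝ) ≤ η * ((B ∩ cblock n (T.b j) len).card : ℝ) := by
      calc (m:ℝ) = ((T.Blk n j).card : ℝ) := hBlkcard.symm
        _ ≤ η * ((B ∩ T.Blk n j).card : ℝ) := hiii
        _ ≤ η * ((B ∩ cblock n (T.b j) len).card : ℝ) := by
            exact mul_le_mul_of_nonneg_left hBmono hη0
    rcases le_or_gt len (m + g) with hle2 | hgt2
    · -- ends inside gap j
      have hgsub : cblock n (cpt n (T.b j) m) (len - m) ⊆ T.Gap n j := by
        rw [CircData.Gap, ← hm, ← hg]
        exact cblock_mono n _ (by omega)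
      have hgap_in_union : T.Gap n j ⊆ T.gapsUnion n := by
        intro y hy
        exact Finset.mem_biUnion.2 ⟨j, Finset.mem_range.2 hj, hy⟩
      have hgsub2 : cblock n (cpt n (T.b j) m) (len - m) ⊆
          T.gapsUnion n ∩ cblock n (T.b j) len := by
        intro y hy
        refine Finset.mem_inter.2 ⟨hgap_in_union (hgsub hy), ?_⟩
        have := cblock_shift n (T.b j) m (len - m)
        rw [Nat.add_sub_cancel' (le_of_lt hgt)] at this
        exact this hy
      have hγ : (len - m : ℕ) ≤ (T.gapsUnion n ∩ cblock n (T.b j) len).card := by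
        calc (len - m : ℕ) = (cblock n (cpt n (T.b j) m) (len - m)).card :=
              (cblock_card n _ _ (by omega)).symm
          _ ≤ _ := Finset.card_le_card hgsub2
      have hγ' : ((len : ℝ) - m) ≤ ((T.gapsUnion n ∩ cblock n (T.b j) len).card : ℝ) := by
        have := Nat.cast_le (α := ℝ) |>.2 hγ
        rwa [Nat.cast_sub (le_of_lt hgt)] at this
      linarith
    · -- continue past gap j to the next block
      have hm1 : 0 < m := hTlen j hj
      set len' := len - (m + g) with hlen'
      have hjj : ∃ j', j' < T.p ∧ T.b j' = cpt n (T.b j) (m + g) := by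
        rcases lt_or_ge (j + 1) T.p with h' | h'
        · exact ⟨j + 1, h', hTadj j h'⟩
        · have : j = T.p - 1 := by omega
          exact ⟨0, hTp, by rw [hm, hg, hTadj0, this]⟩
      obtain ⟨j', hj', hbj'⟩ := hjj
      have hsplit := inter_card_split n (T.b j) B (le_of_lt hgt2) hlen
      have hsplitΓ := inter_card_split n (T.b j) (T.gapsUnion n) (le_of_lt hgt2) hlen
      rw [← hbj'] at hsplit hsplitΓ
      have hih := ih len' (by omega) (by omega) j' hj'
      -- B ∩ first part ≥ B ∩ Blk j
      have hfirstB : ((B ∩ T.Blk n j).card : ℝ) ≤ ((B ∩ cblock n (T.b j) (m + g)).card : ℝ) := by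
        exact_mod_cast Finset.card_le_card (Finset.inter_subset_inter (Finset.Subset.refl B)
          (by rw [CircData.Blk, ← hm]; exact cblock_mono n _ (by omega)))
      -- Γ ∩ first part ≥ g
      have hgap_sub_first : T.Gap n j ⊆ T.gapsUnion n ∩ cblock n (T.b j) (m + g) := by
        intro y hy
        refine Finset.mem_inter.2 ⟨Finset.mem_biUnion.2 ⟨j, Finset.mem_range.2 hj, hy⟩, ?_⟩
        rw [CircData.Gap, ← hm, ← hg] at hy
        exact cblock_shift n (T.b j) m g hy
      have hΓfirst : (g : ℝ) ≤ ((T.gapsUnion n ∩ cblock n (T.b j) (m + g)).card : ℝ) := by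
        have : (g : ℕ) ≤ (T.gapsUnion n ∩ cblock n (T.b j) (m + g)).card := by
          calc g = (T.Gap n j).card := by
                rw [CircData.Gap, ← hm, ← hg, cblock_card n _ _ (by omega)]
            _ ≤ _ := Finset.card_le_card hgap_sub_first
        exact_mod_cast this
      have hlen'cast : ((len' : ℕ) : ℝ) = (len : ℝ) - m - g := by
        rw [hlen', Nat.cast_sub (le_of_lt hgt2)]; push_cast; ring
      have hiiiB : (m : ℝ) ≤ η * ((B ∩ T.Blk n j).card : ℝ) := by
        calc (m:ℝ) = ((T.Blk n j).card : ℝ) := hBlkcard.symm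
          _ ≤ _ := hiii
      have hc1 : ((B ∩ cblock n (T.b j) len).card : ℝ)
          = ((B ∩ cblock n (T.b j) (m+g)).card : ℝ) + ((B ∩ cblock n (T.b j') len').card : ℝ) := by
        exact_mod_cast congrArg (Nat.cast (R := ℝ)) hsplit
      have hc2 : ((T.gapsUnion n ∩ cblock n (T.b j) len).card : ℝ)
          = ((T.gapsUnion n ∩ cblock n (T.b j) (m+g)).card : ℝ)
            + ((T.gapsUnion n ∩ cblock n (T.b j') len').card : ℝ) := by
        exact_mod_cast congrArg (Nat.cast (R := ℝ)) hsplitΓ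
      have hmul : η * ((B ∩ T.Blk n j).card : ℝ) ≤ η * ((B ∩ cblock n (T.b j) (m+g)).card : ℝ) :=
        mul_le_mul_of_nonneg_left hfirstB hη0
      rw [hc1, hc2, mul_add]
      rw [hlen'cast] at hih
      linarith

/-- Same as `bdense` but starting at offset `lenB j + r` (inside or at the start of gap `j`,
or at the next block start when `r = lenG j`). -/
lemma bdense_gap (n : ℕ) (B : Finset ℕ) (η : ℝ) (T : CircData)
    (hT : IsBlockStructure n B η T) (hη0 : 0 ≤ η) (hn : 0 < n)
    (j : ℕ) (hj : j < T.p) (r : ℕ) (hr : r ≤ T.lenG j)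
    (len : ℕ) (hlen : len ≤ n) :
    (len : ℝ) - ((T.gapsUnion n ∩ cblock n (cpt n (T.b j) (T.lenB j + r)) len).card : ℝ)
      ≤ η * ((B ∩ cblock n (cpt n (T.b j) (T.lenB j + r)) len).card : ℝ) := by
  obtain ⟨hTp, hTlen, hTadj, hTadj0, hTpart, hTdisj, hTbg, hTbB, hTgapB, hTiii, hTiv⟩ := hT
  set m := T.lenB j with hm
  set g := T.lenG j with hg
  set w := cpt n (T.b j) (m + r) with hw
  rcases le_or_gt len (g - r) with hle | hgt
  · -- W entirely inside gap j
    have hsub : cblock n w len ⊆ T.Gap n j := by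
      rw [CircData.Gap, ← hm, ← hg]
      have h1 : cblock n w len ⊆ cblock n (cpt n (T.b j) m) (r + len) := by
        have := cblock_shift n (cpt n (T.b j) m) r len
        rw [cpt_add] at this
        rw [hw]
        exact fun y hy => this hy
      exact fun y hy => cblock_mono n _ (by omega) (h1 hy)
    have hsub2 : cblock n w len ⊆ T.gapsUnion n ∩ cblock n w len := fun y hy =>
      Finset.mem_inter.2 ⟨Finset.mem_biUnion.2 ⟨j, Finset.mem_range.2 hj, hsub hy⟩, hy⟩
    have hγ : (len : ℝ) ≤ ((T.gapsUnion n ∩ cblock n w len).card : ℝ) := by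
      have : len ≤ (T.gapsUnion n ∩ cblock n w len).card := by
        calc len = (cblock n w len).card := (cblock_card n w len hlen).symm
          _ ≤ _ := Finset.card_le_card hsub2
      exact_mod_cast this
    have : (0:ℝ) ≤ η * ((B ∩ cblock n w len).card : ℝ) := by positivity
    linarith
  · -- pass through the rest of gap j, then use bdense at the next block start
    set f := g - r with hf
    have hjj : ∃ j', j' < T.p ∧ T.b j' = cpt n (T.b j) (m + g) := by
      rcases lt_or_ge (j + 1) T.p with h' | h'
      · exact ⟨j + 1, h', hTadj j h'⟩
      · have hjeq : j = T.p - 1 := by omega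
        exact ⟨0, hTp, by rw [hm, hg, hTadj0, hjeq]⟩
    obtain ⟨j', hj', hbj'⟩ := hjj
    have hwf : cpt n w f = T.b j' := by
      rw [hw, cpt_add, hbj']
      congr 1
      omega
    have hsplitB := inter_card_split n w B (le_of_lt hgt) hlen
    have hsplitΓ := inter_card_split n w (T.gapsUnion n) (le_of_lt hgt) hlen
    rw [hwf] at hsplitB hsplitΓ
    -- front ⊆ gap j
    have hfront : cblock n w f ⊆ T.Gap n j := by
      rw [CircData.Gap, ← hm, ← hg]
      have h1 : cblock n w f ⊆ cblock n (cpt n (T.b j) m) (r + f) := by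
        have := cblock_shift n (cpt n (T.b j) m) r f
        rw [cpt_add] at this
        rw [hw]
        exact fun y hy => this hy
      exact fun y hy => cblock_mono n _ (by omega) (h1 hy)
    have hfrontΓ : (f : ℝ) ≤ ((T.gapsUnion n ∩ cblock n w f).card : ℝ) := by
      have : f ≤ (T.gapsUnion n ∩ cblock n w f).card := by
        calc f = (cblock n w f).card := (cblock_card n w f (by omega)).symm
          _ ≤ _ := Finset.card_le_card (fun y hy => Finset.mem_inter.2
              ⟨Finset.mem_biUnion.2 ⟨j, Finset.mem_range.2 hj, hfront hy⟩, hy⟩)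
      exact_mod_cast this
    have hbd := bdense n B η T
      ⟨hTp, hTlen, hTadj, hTadj0, hTpart, hTdisj, hTbg, hTbB, hTgapB, hTiii, hTiv⟩
      hη0 (len - f) (by omega) j' hj'
    have hc1 : ((B ∩ cblock n w len).card : ℝ)
        = ((B ∩ cblock n w f).card : ℝ) + ((B ∩ cblock n (T.b j') (len - f)).card : ℝ) := by
      exact_mod_cast congrArg (Nat.cast (R := ℝ)) hsplitB
    have hc2 : ((T.gapsUnion n ∩ cblock n w len).card : ℝ)
        = ((T.gapsUnion n ∩ cblock n w f).card : ℝ)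
          + ((T.gapsUnion n ∩ cblock n (T.b j') (len - f)).card : ℝ) := by
      exact_mod_cast congrArg (Nat.cast (R := ℝ)) hsplitΓ
    have hBfront : (0:ℝ) ≤ ((B ∩ cblock n w f).card : ℝ) := by positivity
    have hcast : ((len - f : ℕ) : ℝ) = (len : ℝ) - f := by
      rw [Nat.cast_sub (le_of_lt hgt)]
    rw [hcast] at hbd
    have hmul : η * ((B ∩ cblock n (T.b j') (len - f)).card : ℝ)
        ≤ η * (((B ∩ cblock n w f).card : ℝ) + ((B ∩ cblock n (T.b j') (len - f)).card : ℝ)) := by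
      apply mul_le_mul_of_nonneg_left _ hη0
      linarith
    rw [hc1, hc2]
    linarith


/-- Proposition 3.4 of the paper. Let `A, B ⊆ [n]` be nonempty
with `|A| ≤ |B|`, and let `δ ≥ η ≥ 1` be reals with `δ·|A| ≤ n−1` and `η·|B| ≤ n−1`.
If `|f_η(B)| − |B| ≤ η − 1` and `A ⊈ B`, then the intervals `[A, f_δ(A)]` and
`[B, f_η(B)]` do not intersect. -/
theorem interval_disjoint_two_densities (n : ℕ) (hn : 0 < n) (A B : Finset ℕ)
    (hA : A ⊆ Finset.Icc 1 n) (hB : B ⊆ Finset.Icc 1 n)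
    (hAne : A.Nonempty) (hBne : B.Nonempty) (hcard : A.card ≤ B.card)
    (δ η : ℝ) (hη1 : 1 ≤ η) (hηδ : η ≤ δ)
    (hδ : δ * (A.card : ℝ) ≤ (n : ℝ) - 1) (hη : η * (B.card : ℝ) ≤ (n : ℝ) - 1)
    (S T : CircData) (hS : IsBlockStructure n A δ S) (hT : IsBlockStructure n B η T)
    (hgap : ((fdelta B T n).card : ℝ) - (B.card : ℝ) ≤ η - 1)
    (hns : ¬ A ⊆ B) :
    ∀ C : Finset ℕ,
      ¬(A ⊆ C ∧ C ⊆ fdelta A S n ∧ B ⊆ C ∧ C ⊆ fdelta B T n) := by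
  intro C hC
  obtain ⟨hAC, hCfA, hBC, hCfB⟩ := hC
  have hT' := hT
  obtain ⟨hSp, hSlen, hSadj, hSadj0, hSpart, hSdisj, hSbg, hSbA, hSgapA, hSiii, hSiv⟩ := hS
  obtain ⟨hTp, hTlen, hTadj, hTadj0, hTpart, hTdisj, hTbg, hTbB, hTgapB, hTiii, hTiv⟩ := hT
  have hη0 : (0:ℝ) ≤ η := by linarith
  -- pick a₀ ∈ A \ B
  obtain ⟨a₀, ha₀A, ha₀B⟩ := Finset.not_subset.1 hns
  -- a₀ lies in the gaps of T
  have ha₀Γ : a₀ ∈ T.gapsUnion n := by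
    have h := hCfB (hAC ha₀A)
    rw [fdelta, Finset.mem_union] at h
    tauto
  -- the total size of the gaps of T is at most η - 1
  have hΓcard : ((T.gapsUnion n).card : ℝ) ≤ η - 1 := by
    have hdisjBΓ : Disjoint B (T.gapsUnion n) := by
      rw [CircData.gapsUnion, Finset.disjoint_biUnion_right]
      intro i hi
      rw [Finset.disjoint_right]
      intro x hx
      exact hTgapB i (Finset.mem_range.1 hi) x hx
    have he : (fdelta B T n).card = B.card + (T.gapsUnion n).card := by
      rw [fdelta, Finset.card_union_of_disjoint hdisjBΓ]
    rw [he] at hgap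
    push_cast at hgap
    linarith
  -- a₀'s block in the structure of A
  have ha₀Icc : a₀ ∈ Finset.Icc 1 n := hA ha₀A
  rw [← hSpart] at ha₀Icc
  obtain ⟨i₀, hi₀r, ha₀bu⟩ := Finset.mem_biUnion.1 ha₀Icc
  have hi₀ : i₀ < S.p := Finset.mem_range.1 hi₀r
  have ha₀L : a₀ ∈ S.Blk n i₀ := by
    rcases Finset.mem_union.1 ha₀bu with h | h
    · exact h
    · exact absurd ha₀A (hSgapA i₀ hi₀ a₀ h)
  set s := S.b i₀ with hs
  set ℓ := S.lenB i₀ with hℓ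
  have hLb : S.Blk n i₀ = cblock n s ℓ := rfl
  have hℓpos : 0 < ℓ := hSlen i₀ hi₀
  -- ℓ ≤ n
  have hℓn : ℓ ≤ n := by
    by_contra hc
    push_neg at hc
    have hiv := hSiv i₀ hi₀ n hn hc
    rw [← hs] at hiv
    rw [cblock_card n s n le_rfl] at hiv
    have h1 : ((cblock n s n ∩ A).card : ℝ) ≤ (A.card : ℝ) := by
      exact_mod_cast Finset.card_le_card Finset.inter_subset_right
    have hδ0 : (0:ℝ) ≤ δ := by linarith
    nlinarith
  rw [hLb] at ha₀L
  obtain ⟨d, hd, hda⟩ := mem_cblock.1 ha₀L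
  -- a₀ is in some gap of T
  obtain ⟨j', hj'r, ha₀g⟩ := Finset.mem_biUnion.1 ha₀Γ
  have hj' : j' < T.p := Finset.mem_range.1 hj'r
  -- locate s in the partition of T
  have hsA : s ∈ A := hSbA i₀ hi₀
  have hs1n : 1 ≤ s ∧ s ≤ n := by
    have := hA hsA; rw [Finset.mem_Icc] at this; exact this
  have hsIcc : s ∈ Finset.Icc 1 n := hA hsA
  rw [← hTpart] at hsIcc
  obtain ⟨j, hjr, hsbu⟩ := Finset.mem_biUnion.1 hsIcc
  have hj : j < T.p := Finset.mem_range.1 hjr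
  -- produce the offset k and the η-density inequality for W
  obtain ⟨k, hkd, hWineq⟩ : ∃ k, k ≤ d ∧
      ((ℓ - k : ℕ) : ℝ)
          - ((T.gapsUnion n ∩ cblock n (cpt n s k) (ℓ - k)).card : ℝ)
        ≤ η * ((B ∩ cblock n (cpt n s k) (ℓ - k)).card : ℝ) := by
    rcases Finset.mem_union.1 hsbu with hsb | hsg
    · -- s inside block j of T
      rw [CircData.Blk] at hsb
      obtain ⟨off, hoff, hoffe⟩ := mem_cblock.1 hsb
      refine ⟨T.lenB j - off, ?_, ?_⟩
      · -- k ≤ d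
        by_contra hc
        push_neg at hc
        have ha₀blk : a₀ ∈ T.Blk n j := by
          rw [CircData.Blk]
          refine mem_cblock.2 ⟨off + d, by omega, ?_⟩
          rw [← cpt_add, hoffe, hda]
        rcases eq_or_ne j' j with rfl | hne
        · exact Finset.disjoint_left.1 (hTbg j' hj') ha₀blk ha₀g
        · exact Finset.disjoint_left.1
            (hTdisj j hj j' hj' hne.symm)
            (Finset.mem_union_left _ ha₀blk) (Finset.mem_union_right _ ha₀g)
      · -- the density inequality via bdense_gap with r = 0
        have hstart : cpt n s (T.lenB j - off) = cpt n (T.b j) (T.lenB j + 0) := by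
          rw [← hoffe, cpt_add]
          congr 1
          omega
        rw [hstart]
        exact bdense_gap n B η T hT' hη0 hn j hj 0 (Nat.zero_le _) (ℓ - (T.lenB j - off))
          (by omega)
    · -- s inside gap j of T : k = 0
      rw [CircData.Gap] at hsg
      obtain ⟨r, hr, hre⟩ := mem_cblock.1 hsg
      refine ⟨0, Nat.zero_le _, ?_⟩
      have hs0 : cpt n s 0 = s := cpt_zero n s hs1n.1 hs1n.2
      have hseq : s = cpt n (T.b j) (T.lenB j + r) := by
        rw [← hre, cpt_add]
      rw [hs0, Nat.sub_zero, hseq]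
      exact bdense_gap n B η T hT' hη0 hn j hj r (le_of_lt hr) ℓ hℓn
  have hkℓ : k < ℓ := lt_of_le_of_lt hkd hd
  set W := cblock n (cpt n s k) (ℓ - k) with hW
  -- W ⊆ L
  have hWL : W ⊆ cblock n s ℓ := by
    rw [hW]
    have := cblock_shift n s k (ℓ - k)
    rwa [Nat.add_sub_cancel' (le_of_lt hkℓ)] at this
  -- B ∩ W ⊆ A
  have hBWA : ∀ x ∈ B ∩ W, x ∈ A := by
    intro x hx
    obtain ⟨hxB, hxW⟩ := Finset.mem_inter.1 hx
    have hxC := hBC hxB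
    have hxfA := hCfA hxC
    rw [fdelta, Finset.mem_union] at hxfA
    rcases hxfA with h | h
    · exact h
    · exfalso
      obtain ⟨i', hi'r, hxg⟩ := Finset.mem_biUnion.1 h
      have hi' : i' < S.p := Finset.mem_range.1 hi'r
      have hxblk : x ∈ S.Blk n i₀ := by rw [hLb]; exact hWL hxW
      rcases eq_or_ne i' i₀ with rfl | hne
      · exact Finset.disjoint_left.1 (hSbg i' hi') hxblk hxg
      · exact Finset.disjoint_left.1 (hSdisj i₀ hi₀ i' hi' hne.symm)
          (Finset.mem_union_left _ hxblk) (Finset.mem_union_right _ hxg)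
  -- a₀ ∈ A ∩ W
  have ha₀W : a₀ ∈ W := by
    rw [hW]
    refine mem_cblock.2 ⟨d - k, by omega, ?_⟩
    rw [cpt_add, Nat.add_sub_cancel' hkd, hda]
  -- card comparison : |B ∩ W| + 1 ≤ |A ∩ W|
  have hcardBA : (B ∩ W).card + 1 ≤ (A ∩ W).card := by
    have hins : insert a₀ (B ∩ W) ⊆ A ∩ W := by
      refine Finset.insert_subset (Finset.mem_inter.2 ⟨ha₀A, ha₀W⟩) ?_
      intro x hx
      exact Finset.mem_inter.2 ⟨hBWA x hx, (Finset.mem_inter.1 hx).2⟩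
    have := Finset.card_le_card hins
    rwa [Finset.card_insert_of_notMem
      (fun hc => ha₀B (Finset.mem_inter.1 hc).1)] at this
  -- gap part of W is small
  have hΓW : ((T.gapsUnion n ∩ W).card : ℝ) ≤ η - 1 := by
    have : ((T.gapsUnion n ∩ W).card : ℝ) ≤ ((T.gapsUnion n).card : ℝ) := by
      exact_mod_cast Finset.card_le_card Finset.inter_subset_left
    linarith
  -- η-side conclusion: (ℓ - k) + 1 ≤ η |A ∩ W|
  have hfin1 : ((ℓ - k : ℕ) : ℝ) + 1 ≤ η * ((A ∩ W).card : ℝ) := by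
    have h1 : η * (((B ∩ W).card : ℝ) + 1) ≤ η * ((A ∩ W).card : ℝ) := by
      apply mul_le_mul_of_nonneg_left _ hη0
      exact_mod_cast hcardBA
    have h2 := hWineq
    nlinarith
  have hfin2 : η * ((A ∩ W).card : ℝ) ≤ δ * ((A ∩ W).card : ℝ) := by
    apply mul_le_mul_of_nonneg_right hηδ
    positivity
  -- (iii) for block i₀
  have hiii := (hSiii i₀ hi₀).1
  rw [hLb, cblock_card n s ℓ hℓn] at hiii
  have hcastlk : ((ℓ - k : ℕ) : ℝ) = (ℓ : ℝ) - (k : ℝ) := by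
    rw [Nat.cast_sub (le_of_lt hkℓ)]
  rcases Nat.eq_zero_or_pos k with hk0 | hkpos
  · -- k = 0 : W is the whole block
    have hWeq : W = cblock n s ℓ := by
      rw [hW, hk0, cpt_zero n s hs1n.1 hs1n.2, Nat.sub_zero]
    rw [hWeq] at hfin1 hfin2
    rw [hk0] at hfin1
    simp only [Nat.sub_zero] at hfin1
    linarith
  · -- k > 0 : use (iv) for the prefix of length k
    have hiv := hSiv i₀ hi₀ k hkpos (by omega)
    rw [← hs] at hiv
    rw [cblock_card n s k (by omega)] at hiv
    have hsplit := inter_card_split n s A (le_of_lt hkℓ) hℓn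
    have hsplitR : ((A ∩ cblock n s ℓ).card : ℝ)
        = ((A ∩ cblock n s k).card : ℝ) + ((A ∩ W).card : ℝ) := by
      rw [hW]
      exact_mod_cast congrArg (Nat.cast (R := ℝ)) hsplit
    rw [Finset.inter_comm (cblock n s k) A] at hiv
    rw [hcastlk] at hfin1
    have hmulsplit : δ * ((A ∩ cblock n s ℓ).card : ℝ)
        = δ * ((A ∩ cblock n s k).card : ℝ) + δ * ((A ∩ W).card : ℝ) := by
      rw [hsplitR]; ring
    linarith
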